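/- arXiv:2209.14900 — 4 statements merged into one kernel-verified Lean document; each statement's English description precedes it below -/
import Mathlib

section
/- Consider N devices with channel gains gₙ > 0, noise density N₀ > 0, data sizes dₙ > 0, minimum rates rₙ^min > 0, power bounds 0 ≤ pₙ^min ≤ pₙ^max, total bandwidth B_tot > 0, and a constant w > 0. Let S = {(p, B) ∈ ℝᴺ × ℝᴺ : for all n, pₙ^min ≤ pₙ ≤ pₙ^max, Bₙ > 0, Gₙ(pₙ, Bₙ) ≥ rₙ^min, and Σₙ Bₙ ≤ B_tot}. Suppose (p*, B*, β*) minimizes w·Σₙ βₙ over the set {(p, B, β) : (p, B) ∈ S and pₙ·dₙ − βₙ·Gₙ(pₙ, Bₙ) ≤ 0 for all n}. Define νₙ* = w / Gₙ(pₙ*, Bₙ*) and β̂ₙ = pₙ*·dₙ / Gₙ(pₙ*, Bₙ*). Then (p*, B*) minimizes the function (p, B) ↦ Σₙ νₙ*·(pₙ·dₙ − β̂ₙ·Gₙ(pₙ, Bₙ)) over S. -/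
/-! The rate `B · log₂(1 + c p / B)` is the perspective of a concave function, hence jointly
concave; so the feasible set is convex and `(p*, B*)` minimises the sum of ratios `Σ pₙ dₙ / Gₙ`
over it (take `βₙ` equal to the ratios, and `β̂ ≤ β*`). Along the segment from `(p*, B*)` to a
feasible `(p, B)`, concavity bounds each ratio by `((1 - l) xₙ* + l xₙ) / ((1 - l) Gₙ* + l Gₙ)`,
which agrees with the ratio at `l = 0` and has right derivative `(xₙ Gₙ* - xₙ* Gₙ) / Gₙ*²` there.
Minimality makes the sum of these derivatives nonnegative, and that sum is the subtractive
objective at `(p, B)` divided by `w`, while the objective vanishes at `(p*, B*)`. -/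

open Finset Filter Topology

theorem ConcaveOn.perspective {s : Set ℝ} {f : ℝ → ℝ} (hf : ConcaveOn ℝ s f) :
    ConcaveOn ℝ {x : ℝ × ℝ | 0 < x.2 ∧ x.1 / x.2 ∈ s} (fun x => x.2 * f (x.1 / x.2)) := by
  have key : ∀ {x₁ t₁ x₂ t₂ a b : ℝ}, 0 < t₁ → 0 < t₂ → 0 ≤ a → 0 ≤ b → a + b = 1 →
      0 < a * t₁ + b * t₂ ∧
      (a * x₁ + b * x₂) / (a * t₁ + b * t₂) =
        (a * t₁ / (a * t₁ + b * t₂)) * (x₁ / t₁) + (b * t₂ / (a * t₁ + b * t₂)) * (x₂ / t₂) ∧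
      a * t₁ / (a * t₁ + b * t₂) + b * t₂ / (a * t₁ + b * t₂) = 1 := by
    intro x₁ t₁ x₂ t₂ a b ht₁ ht₂ ha hb hab
    have hT : 0 < a * t₁ + b * t₂ := by
      simpa only [smul_eq_mul] using Set.mem_Ioi.1 (convex_Ioi (0 : ℝ) ht₁ ht₂ ha hb hab)
    refine ⟨hT, ?_, ?_⟩ <;> field_simp
  refine ⟨?_, ?_⟩
  · rintro ⟨x₁, t₁⟩ ⟨ht₁, hs₁⟩ ⟨x₂, t₂⟩ ⟨ht₂, hs₂⟩ a b ha hb hab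
    obtain ⟨hT, hcomb, hsum⟩ := key (x₁ := x₁) (x₂ := x₂) ht₁ ht₂ ha hb hab
    simp only [Set.mem_ofPred_eq, Prod.fst_add, Prod.snd_add, Prod.smul_fst, Prod.smul_snd,
      smul_eq_mul] at hs₁ hs₂ ⊢
    exact ⟨hT, hcomb ▸ hf.1 hs₁ hs₂ (by positivity) (by positivity) hsum⟩
  · rintro ⟨x₁, t₁⟩ ⟨ht₁, hs₁⟩ ⟨x₂, t₂⟩ ⟨ht₂, hs₂⟩ a b ha hb hab
    obtain ⟨hT, hcomb, hsum⟩ := key (x₁ := x₁) (x₂ := x₂) ht₁ ht₂ ha hb hab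
    have hconc := hf.2 hs₁ hs₂ (by positivity : 0 ≤ a * t₁ / (a * t₁ + b * t₂))
      (by positivity : 0 ≤ b * t₂ / (a * t₁ + b * t₂)) hsum
    simp only [Prod.fst_add, Prod.snd_add, Prod.smul_fst, Prod.smul_snd, smul_eq_mul,
      ← hcomb] at hconc ⊢
    calc a * (t₁ * f (x₁ / t₁)) + b * (t₂ * f (x₂ / t₂))
        = (a * t₁ + b * t₂) * (a * t₁ / (a * t₁ + b * t₂) * f (x₁ / t₁) +
            b * t₂ / (a * t₁ + b * t₂) * f (x₂ / t₂)) := by field_simp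
      _ ≤ (a * t₁ + b * t₂) * f ((a * x₁ + b * x₂) / (a * t₁ + b * t₂)) :=
        mul_le_mul_of_nonneg_left hconc hT.le

theorem concaveOn_logb_one_add_mul {b c : ℝ} (hb : 1 < b) (hc : 0 ≤ c) :
    ConcaveOn ℝ (Set.Ici 0) (fun t => Real.logb b (1 + c * t)) := by
  refine ⟨convex_Ici 0, fun x hx y hy μ ν hμ hν hμν => ?_⟩
  have hlog := strictConcaveOn_log_Ioi.concaveOn.2
    (show 0 < 1 + c * x by nlinarith [Set.mem_Ici.1 hx])
    (show 0 < 1 + c * y by nlinarith [Set.mem_Ici.1 hy]) hμ hν hμν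
  have hcomb : μ * (1 + c * x) + ν * (1 + c * y) = 1 + c * (μ * x + ν * y) := by
    linear_combination hμν
  simp only [smul_eq_mul, hcomb] at hlog ⊢
  simp only [Real.logb]
  rw [← mul_div_assoc, ← mul_div_assoc, ← add_div]
  exact div_le_div_of_nonneg_right hlog (Real.log_pos hb).le

theorem concaveOn_rate {c : ℝ} (hc : 0 ≤ c) :
    ConcaveOn ℝ {x : ℝ × ℝ | 0 ≤ x.1 ∧ 0 < x.2}
      (fun x => x.2 * Real.logb 2 (1 + c * x.1 / x.2)) := by
  convert (concaveOn_logb_one_add_mul one_lt_two hc).perspective using 1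
  · ext x
    simp only [Set.mem_ofPred_eq, Set.mem_Ici]
    exact ⟨fun h => ⟨h.2, div_nonneg h.1 h.2.le⟩,
      fun h => ⟨by simpa using (le_div_iff₀ h.1).1 h.2, h.1⟩⟩
  · simp only [mul_div_assoc]

theorem sum_mul_sub_mul_div_sq_nonneg_of_eventually_le {ι : Type*} [Fintype ι]
    {x y u v : ι → ℝ} (hu : ∀ i, u i ≠ 0)
    (h : ∀ᶠ l in 𝓝[>] 0, ∑ i, x i / u i ≤
      ∑ i, ((1 - l) * x i + l * y i) / ((1 - l) * u i + l * v i)) :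
    0 ≤ ∑ i, (y i * u i - x i * v i) / u i ^ 2 := by
  set F : ℝ → ℝ := fun l => ∑ i, (y i * u i - x i * v i) / (u i * ((1 - l) * u i + l * v i))
  have hF0 : F 0 = ∑ i, (y i * u i - x i * v i) / u i ^ 2 := by simp only [F]; ring_nf
  have hFcont : Tendsto F (𝓝 0) (𝓝 (F 0)) :=
    tendsto_finsetSum _ fun i _ => ContinuousAt.tendsto <| by
      fun_prop (disch := simpa using mul_ne_zero (hu i) (hu i))
  have hden : ∀ᶠ l in 𝓝 (0 : ℝ), ∀ i, (1 - l) * u i + l * v i ≠ 0 :=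
    eventually_all.2 fun i => (by fun_prop : Continuous fun l : ℝ => (1 - l) * u i + l * v i)
      |>.continuousAt.eventually_ne (by simpa using hu i)
  have hFpos : ∀ᶠ l in 𝓝[>] 0, 0 ≤ F l := by
    filter_upwards [h, self_mem_nhdsWithin, nhdsWithin_le_nhds hden] with l hl hl0 hden
    have hdiff : ∑ i, ((1 - l) * x i + l * y i) / ((1 - l) * u i + l * v i) - ∑ i, x i / u i
        = l * F l := by
      rw [← sum_sub_distrib, mul_sum]
      refine sum_congr rfl fun i _ => ?_
      have := hu i
      have := hden i
      field_simp
      ring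
    exact nonneg_of_mul_nonneg_right (hdiff ▸ sub_nonneg.2 hl) hl0
  exact hF0 ▸ ge_of_tendsto (hFcont.mono_left nhdsWithin_le_nhds) hFpos

theorem isMinOn_sum_div_of_epigraph {ι E : Type*} [Fintype ι] {S : Set E} {x g : ι → E → ℝ}
    {z₀ : E} {β₀ : ι → ℝ} (hg : ∀ i, ∀ z ∈ S, 0 < g i z) (hz₀ : z₀ ∈ S)
    (hβ₀ : ∀ i, x i z₀ - β₀ i * g i z₀ ≤ 0)
    (hmin : ∀ z ∈ S, ∀ β : ι → ℝ, (∀ i, x i z - β i * g i z ≤ 0) → ∑ i, β₀ i ≤ ∑ i, β i) :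
    IsMinOn (fun z => ∑ i, x i z / g i z) S z₀ := by
  refine isMinOn_iff.2 fun z hz => ?_
  calc ∑ i, x i z₀ / g i z₀ ≤ ∑ i, β₀ i :=
        sum_le_sum fun i _ => (div_le_iff₀ (hg i z₀ hz₀)).2 (by linarith [hβ₀ i])
    _ ≤ ∑ i, x i z / g i z :=
        hmin z hz _ fun i => by rw [div_mul_cancel₀ _ (hg i z hz).ne', sub_self]

theorem IsMinOn.sum_div_first_order_nonneg {ι E : Type*} [Fintype ι] [AddCommGroup E]
    [Module ℝ E] {S : Set E} {f g : ι → E → ℝ} {z₀ z : E}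
    (hmin : IsMinOn (fun z => ∑ i, f i z / g i z) S z₀) (hS : Convex ℝ S)
    (hf : ∀ i, ConvexOn ℝ S (f i)) (hf₀ : ∀ i, ∀ z ∈ S, 0 ≤ f i z)
    (hg : ∀ i, ConcaveOn ℝ S (g i)) (hg₀ : ∀ i, ∀ z ∈ S, 0 < g i z)
    (hz₀ : z₀ ∈ S) (hz : z ∈ S) :
    0 ≤ ∑ i, (f i z * g i z₀ - f i z₀ * g i z) / g i z₀ ^ 2 := by
  refine sum_mul_sub_mul_div_sq_nonneg_of_eventually_le (fun i => (hg₀ i z₀ hz₀).ne') ?_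
  filter_upwards [Ioo_mem_nhdsGT one_pos] with l ⟨hl₀, hl₁⟩
  have hzl : (1 - l) • z₀ + l • z ∈ S := hS hz₀ hz (by linarith) hl₀.le (by ring)
  calc ∑ i, f i z₀ / g i z₀ ≤ ∑ i, f i ((1 - l) • z₀ + l • z) / g i ((1 - l) • z₀ + l • z) :=
        isMinOn_iff.1 hmin _ hzl
    _ ≤ ∑ i, ((1 - l) * f i z₀ + l * f i z) / ((1 - l) * g i z₀ + l * g i z) := by
      refine sum_le_sum fun i _ => div_le_div₀ ?_ ((hf i).2 hz₀ hz (by linarith) hl₀.le (by ring))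
        ?_ ((hg i).2 hz₀ hz (by linarith) hl₀.le (by ring))
      · nlinarith [hf₀ i z₀ hz₀, hf₀ i z hz]
      · nlinarith [hg₀ i z₀ hz₀, hg₀ i z hz]

def feasibleSet {ι : Type*} [Fintype ι] (G : ι → ℝ → ℝ → ℝ) (pmin pmax rmin : ι → ℝ)
    (Btot : ℝ) : Set ((ι → ℝ) × (ι → ℝ)) :=
  {pB | (∀ n, pmin n ≤ pB.1 n ∧ pB.1 n ≤ pmax n ∧ 0 < pB.2 n ∧
    rmin n ≤ G n (pB.1 n) (pB.2 n)) ∧ (∑ n, pB.2 n) ≤ Btot}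

section feasibleSet

variable {ι : Type*} [Fintype ι] {G : ι → ℝ → ℝ → ℝ} {pmin pmax rmin : ι → ℝ} {Btot : ℝ}

theorem convex_feasibleSet
    (hG : ∀ n, ConcaveOn ℝ {x : ℝ × ℝ | 0 ≤ x.1 ∧ 0 < x.2} (fun x => G n x.1 x.2))
    (hpmin : ∀ n, 0 ≤ pmin n) : Convex ℝ (feasibleSet G pmin pmax rmin Btot) := by
  rintro ⟨p₁, B₁⟩ ⟨h₁, hsum₁⟩ ⟨p₂, B₂⟩ ⟨h₂, hsum₂⟩ a b ha hb hab
  refine ⟨fun n => ?_, ?_⟩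
  · obtain ⟨hlo₁, hhi₁, hB₁, hr₁⟩ := h₁ n
    obtain ⟨hlo₂, hhi₂, hB₂, hr₂⟩ := h₂ n
    have hp := convex_Icc (pmin n) (pmax n) ⟨hlo₁, hhi₁⟩ ⟨hlo₂, hhi₂⟩ ha hb hab
    have hrate := (hG n).convex_ge (rmin n) (x := (p₁ n, B₁ n)) (y := (p₂ n, B₂ n))
      ⟨⟨(hpmin n).trans hlo₁, hB₁⟩, hr₁⟩ ⟨⟨(hpmin n).trans hlo₂, hB₂⟩, hr₂⟩ ha hb hab
    simp only [Set.mem_Icc, Set.mem_ofPred_eq, Prod.smul_mk, Prod.mk_add_mk, smul_eq_mul]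
      at hp hrate
    simp only [Prod.fst_add, Prod.snd_add, Prod.smul_fst, Prod.smul_snd, Pi.add_apply,
      Pi.smul_apply, smul_eq_mul]
    exact ⟨hp.1, hp.2, hrate.1.2, hrate.2⟩
  · simp only [Prod.snd_add, Prod.smul_snd, Pi.add_apply, Pi.smul_apply, smul_eq_mul,
      sum_add_distrib, ← mul_sum]
    simpa only [smul_eq_mul] using Set.mem_Iic.1 (convex_Iic Btot hsum₁ hsum₂ ha hb hab)

theorem concaveOn_feasibleSet
    (hG : ∀ n, ConcaveOn ℝ {x : ℝ × ℝ | 0 ≤ x.1 ∧ 0 < x.2} (fun x => G n x.1 x.2))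
    (hpmin : ∀ n, 0 ≤ pmin n) (n : ι) :
    ConcaveOn ℝ (feasibleSet G pmin pmax rmin Btot) (fun z => G n (z.1 n) (z.2 n)) :=
  ((hG n).comp_linearMap ((LinearMap.proj n).prodMap (LinearMap.proj n))).subset
    (fun _ hz => ⟨(hpmin n).trans (hz.1 n).1, (hz.1 n).2.2.1⟩) (convex_feasibleSet hG hpmin)

end feasibleSet

theorem sp2_epigraph_to_subtractive_general (N : ℕ)
    (g d rmin pmin pmax : Fin N → ℝ) (N0 Btot w : ℝ)
    (hg : ∀ n, 0 < g n) (hN0 : 0 < N0) (hd : ∀ n, 0 < d n) (hrmin : ∀ n, 0 < rmin n)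
    (hpmin : ∀ n, 0 ≤ pmin n)
    (hw : 0 < w)
    (G : Fin N → ℝ → ℝ → ℝ)
    (hG : ∀ n p B, G n p B = B * Real.logb 2 (1 + g n * p / (N0 * B)))
    (S : Set ((Fin N → ℝ) × (Fin N → ℝ)))
    (hS : S = {pB | (∀ n, pmin n ≤ pB.1 n ∧ pB.1 n ≤ pmax n ∧ 0 < pB.2 n ∧
                      rmin n ≤ G n (pB.1 n) (pB.2 n)) ∧ (∑ n, pB.2 n) ≤ Btot})
    (pstar Bstar βstar : Fin N → ℝ)
    (hfeas : (pstar, Bstar) ∈ S)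
    (hepi : ∀ n, pstar n * d n - βstar n * G n (pstar n) (Bstar n) ≤ 0)
    (hmin : ∀ (p B β : Fin N → ℝ), (p, B) ∈ S →
        (∀ n, p n * d n - β n * G n (p n) (B n) ≤ 0) →
        w * ∑ n, βstar n ≤ w * ∑ n, β n)
    (νstar βhat : Fin N → ℝ)
    (hν : ∀ n, νstar n = w / G n (pstar n) (Bstar n))
    (hβ : ∀ n, βhat n = pstar n * d n / G n (pstar n) (Bstar n)) :
    ∀ (p B : Fin N → ℝ), (p, B) ∈ S →
      ∑ n, νstar n * (pstar n * d n - βhat n * G n (pstar n) (Bstar n)) ≤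
        ∑ n, νstar n * (p n * d n - βhat n * G n (p n) (B n)) := by
  intro p B hz
  obtain rfl : S = feasibleSet G pmin pmax rmin Btot := hS
  have hGc : ∀ n, ConcaveOn ℝ {x : ℝ × ℝ | 0 ≤ x.1 ∧ 0 < x.2} (fun x => G n x.1 x.2) := by
    intro n
    convert concaveOn_rate (div_nonneg (hg n).le hN0.le) using 2 with x
    rw [hG, mul_div_mul_comm, ← mul_div_assoc]
  have hconv : Convex ℝ (feasibleSet G pmin pmax rmin Btot) := convex_feasibleSet hGc hpmin
  have hGpos : ∀ n, ∀ z ∈ feasibleSet G pmin pmax rmin Btot, 0 < G n (z.1 n) (z.2 n) :=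
    fun n z hz => (hrmin n).trans_le (hz.1 n).2.2.2
  have hGstar : ∀ n, G n (pstar n) (Bstar n) ≠ 0 := fun n => (hGpos n _ hfeas).ne'
  have hratio_min := isMinOn_sum_div_of_epigraph (x := fun n z => z.1 n * d n)
    (g := fun n z => G n (z.1 n) (z.2 n)) hGpos hfeas hepi
    fun z hz β hβ => le_of_mul_le_mul_left (hmin z.1 z.2 β hz hβ) hw
  have hfirst := hratio_min.sum_div_first_order_nonneg hconv
    (f := fun n z => z.1 n * d n)
    (fun n => ⟨hconv, fun z₁ _ z₂ _ a b _ _ _ => le_of_eq (by simp only [Prod.fst_add,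
      Prod.smul_fst, Pi.add_apply, Pi.smul_apply, smul_eq_mul]; ring)⟩)
    (fun n z hz => mul_nonneg ((hpmin n).trans (hz.1 n).1) (hd n).le)
    (concaveOn_feasibleSet hGc hpmin) hGpos hfeas hz
  calc ∑ n, νstar n * (pstar n * d n - βhat n * G n (pstar n) (Bstar n)) = 0 :=
        sum_eq_zero fun n _ => by rw [hβ, div_mul_cancel₀ _ (hGstar n), sub_self, mul_zero]
    _ ≤ w * ∑ n, (p n * d n * G n (pstar n) (Bstar n) - pstar n * d n * G n (p n) (B n)) /
          G n (pstar n) (Bstar n) ^ 2 := mul_nonneg hw.le hfirst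
    _ = ∑ n, νstar n * (p n * d n - βhat n * G n (p n) (B n)) := by
      rw [mul_sum]
      refine sum_congr rfl fun n _ => ?_
      rw [hν, hβ]
      have := hGstar n
      field_simp

/-- If (p*, B*, β*) solves the epigraph form SP2_v1 of the sum-of-ratios
problem, then with νₙ* = w/Gₙ(pₙ*, Bₙ*) and β̂ₙ = pₙ*·dₙ/Gₙ(pₙ*, Bₙ*), the point
(p*, B*) minimizes the subtractive-form objective Σₙ νₙ*·(pₙ·dₙ − β̂ₙ·Gₙ(pₙ, Bₙ))
over the feasible set S. -/
theorem sp2_epigraph_to_subtractive (N : ℕ) (hN : 1 ≤ N)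
    (g d rmin pmin pmax : Fin N → ℝ) (N0 Btot w : ℝ)
    (hg : ∀ n, 0 < g n) (hN0 : 0 < N0) (hd : ∀ n, 0 < d n) (hrmin : ∀ n, 0 < rmin n)
    (hpmin : ∀ n, 0 ≤ pmin n) (hpm : ∀ n, pmin n ≤ pmax n)
    (hBtot : 0 < Btot) (hw : 0 < w)
    (G : Fin N → ℝ → ℝ → ℝ)
    (hG : ∀ n p B, G n p B = B * Real.logb 2 (1 + g n * p / (N0 * B)))
    (S : Set ((Fin N → ℝ) × (Fin N → ℝ)))
    (hS : S = {pB | (∀ n, pmin n ≤ pB.1 n ∧ pB.1 n ≤ pmax n ∧ 0 < pB.2 n ∧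
                      rmin n ≤ G n (pB.1 n) (pB.2 n)) ∧ (∑ n, pB.2 n) ≤ Btot})
    (pstar Bstar βstar : Fin N → ℝ)
    (hfeas : (pstar, Bstar) ∈ S)
    (hepi : ∀ n, pstar n * d n - βstar n * G n (pstar n) (Bstar n) ≤ 0)
    (hmin : ∀ (p B β : Fin N → ℝ), (p, B) ∈ S →
        (∀ n, p n * d n - β n * G n (p n) (B n) ≤ 0) →
        w * ∑ n, βstar n ≤ w * ∑ n, β n)
    (νstar βhat : Fin N → ℝ)
    (hν : ∀ n, νstar n = w / G n (pstar n) (Bstar n))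
    (hβ : ∀ n, βhat n = pstar n * d n / G n (pstar n) (Bstar n)) :
    ∀ (p B : Fin N → ℝ), (p, B) ∈ S →
      ∑ n, νstar n * (pstar n * d n - βhat n * G n (pstar n) (Bstar n)) ≤
        ∑ n, νstar n * (p n * d n - βhat n * G n (p n) (B n)) :=
  sp2_epigraph_to_subtractive_general N g d rmin pmin pmax N0 Btot w hg hN0 hd hrmin hpmin hw G hG S
    hS pstar Bstar βstar hfeas hepi hmin νstar βhat hν hβ
end

section
/- Let ν > 0, β ≥ 0, τ > 0, d > 0, g > 0, N₀ > 0, r^min > 0, B > 0 and p > 0, and set ϑ = p·g/(N₀·B) and Λ = (ν·β + τ)·g/(N₀·d·ν·ln 2). Suppose the KKT stationarity condition ν·(d − β·g/(N₀·(1+ϑ)·ln 2)) − τ·g/(N₀·(1+ϑ)·ln 2) = 0 holds together with the active rate constraint B·log₂(1+ϑ) = r^min. Then p = (Λ − 1)·N₀·B/g and B = r^min / log₂(Λ). -/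
/-!
Clearing denominators in the stationarity condition gives `ν·d·N₀·(1 + ϑ)·ln 2 = (ν·β + τ)·g`,
i.e. `Λ = 1 + ϑ`. The two closed forms are then the definition of `ϑ` and the active rate
constraint, solved for `p` and for `B`.
-/

lemma eq_div_of_kkt_stationarity {ν β τ d g N0 L x : ℝ} (hν : ν ≠ 0) (hd : d ≠ 0)
    (hN0 : N0 ≠ 0) (hL : L ≠ 0) (hx : x ≠ 0)
    (h : ν * (d - β * g / (N0 * x * L)) - τ * g / (N0 * x * L) = 0) :
    x = (ν * β + τ) * g / (N0 * d * ν * L) := by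
  rw [eq_div_iff (by positivity)]
  field_simp at h
  linear_combination h

theorem kkt_active_rate_closed_form_general (ν β τ d g N0 rmin B p : ℝ)
    (hν : 0 < ν) (hd : 0 < d) (hg : 0 < g)
    (hN0 : 0 < N0) (hB : 0 < B) (hp : 0 < p)
    (ϑ Λ : ℝ)
    (hϑ : ϑ = p * g / (N0 * B))
    (hΛ : Λ = (ν * β + τ) * g / (N0 * d * ν * Real.log 2))
    (hstat : ν * (d - β * g / (N0 * (1 + ϑ) * Real.log 2))
              - τ * g / (N0 * (1 + ϑ) * Real.log 2) = 0)
    (hrate : B * Real.logb 2 (1 + ϑ) = rmin) :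
    p = (Λ - 1) * N0 * B / g ∧ B = rmin / Real.logb 2 Λ := by
  have hϑ_pos : 0 < ϑ := hϑ ▸ by positivity
  have hΛ_eq : Λ = 1 + ϑ := hΛ ▸ (eq_div_of_kkt_stationarity hν.ne' hd.ne' hN0.ne'
    (Real.log_pos one_lt_two).ne' (by positivity) hstat).symm
  have hlogb_pos : 0 < Real.logb 2 Λ := Real.logb_pos one_lt_two (by linarith)
  constructor
  · rw [hΛ_eq, add_sub_cancel_left, hϑ]
    field_simp
  · rw [← hrate, ← hΛ_eq, mul_div_cancel_right₀ _ hlogb_pos.ne']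

/-- Under the KKT stationarity condition and the active minimum-rate
constraint (the τ ≠ 0 case), the closed-form expressions
p = (Λ − 1)·N₀·B/g and B = r^min / log₂ Λ hold, where
Λ = (ν·β + τ)·g/(N₀·d·ν·ln 2) and ϑ = p·g/(N₀·B). -/
theorem kkt_active_rate_closed_form (ν β τ d g N0 rmin B p : ℝ)
    (hν : 0 < ν) (hβ : 0 ≤ β) (hτ : 0 < τ) (hd : 0 < d) (hg : 0 < g)
    (hN0 : 0 < N0) (hrmin : 0 < rmin) (hB : 0 < B) (hp : 0 < p)
    (ϑ Λ : ℝ)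
    (hϑ : ϑ = p * g / (N0 * B))
    (hΛ : Λ = (ν * β + τ) * g / (N0 * d * ν * Real.log 2))
    (hstat : ν * (d - β * g / (N0 * (1 + ϑ) * Real.log 2))
              - τ * g / (N0 * (1 + ϑ) * Real.log 2) = 0)
    (hrate : B * Real.logb 2 (1 + ϑ) = rmin) :
    p = (Λ - 1) * N0 * B / g ∧ B = rmin / Real.logb 2 Λ :=
  kkt_active_rate_closed_form_general ν β τ d g N0 rmin B p hν hd hg hN0 hB hp ϑ Λ hϑ hΛ hstat hrate
end

section
/- Let N ≥ 1 and let w₁ > 0, w₂ ≥ 0, κ > 0, R_g > 0, R_l > 0, and for each n let cₙ > 0, Dₙ > 0 and Tₙ^up ≥ 0. Let λ ∈ ℝᴺ satisfy λₙ ≥ 0 for all n and Σₙ λₙ = w₂·R_g. Then for every f ∈ ℝᴺ with fₙ > 0 and every 𝒯 ∈ ℝ such that R_l·cₙ·Dₙ/fₙ + Tₙ^up ≤ 𝒯 for all n, the primal objective satisfies w₁·R_g·Σₙ κ·R_l·cₙ·Dₙ·fₙ² + w₂·R_g·𝒯 ≥ Σₙ [(2^{−2/3} + 2^{1/3})·R_l·(w₁·κ·R_g)^{1/3}·cₙ·Dₙ·λₙ^{2/3}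 + Tₙ^up·λₙ]. -/
/-!
For each device, weak duality reduces to the scalar inequality
`(2^(-2/3) + 2^(1/3)) a^(1/3) λ^(2/3) ≤ a x² + λ / x`, whose left side is the minimum of the right
side over `x > 0`; it is AM-GM for the three terms `(s u x)³, v³, v³` with `s³ = 2`, `u³ = a`,
`v³ = λ`. Multiplying by `R_l cₙ Dₙ ≥ 0`, adding `Tₙ^up λₙ`, using the deadline constraint weighted
by `λₙ ≥ 0` and summing with `Σ λₙ = w₂ R_g` gives the claim.
-/

open Finset

lemma three_mul_mul_sq_le_cube_add_two_mul_cube {b v : ℝ} (hb : 0 ≤ b) (hv : 0 ≤ v) :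
    3 * b * v ^ 2 ≤ b ^ 3 + 2 * v ^ 3 := by
  nlinarith [mul_nonneg (sq_nonneg (b - v)) hb, mul_nonneg (sq_nonneg (b - v)) hv]

lemma rpow_one_third_pow {x : ℝ} (hx : 0 ≤ x) (n : ℕ) :
    (x ^ ((1 : ℝ) / 3)) ^ n = x ^ ((n : ℝ) / 3) := by
  rw [← Real.rpow_natCast, ← Real.rpow_mul hx, one_div_mul_eq_div]

lemma rpow_one_third_mul_rpow_two_thirds_le {a l x : ℝ} (ha : 0 ≤ a) (hl : 0 ≤ l) (hx : 0 < x) :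
    ((2 : ℝ) ^ (-(2 : ℝ) / 3) + (2 : ℝ) ^ ((1 : ℝ) / 3)) * a ^ ((1 : ℝ) / 3) * l ^ ((2 : ℝ) / 3)
      ≤ a * x ^ 2 + l / x := by
  set s := (2 : ℝ) ^ ((1 : ℝ) / 3)
  set u := a ^ ((1 : ℝ) / 3)
  set v := l ^ ((1 : ℝ) / 3)
  have hs : 0 < s := by positivity
  have hs3 : s ^ 3 = 2 := by rw [rpow_one_third_pow zero_le_two]; norm_num
  have hu3 : u ^ 3 = a := by rw [rpow_one_third_pow ha]; norm_num
  have hv3 : v ^ 3 = l := by rw [rpow_one_third_pow hl]; norm_num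
  have hv2 : l ^ ((2 : ℝ) / 3) = v ^ 2 := by rw [rpow_one_third_pow hl]; norm_num
  have hs2 : (2 : ℝ) ^ (-(2 : ℝ) / 3) = (s ^ 2)⁻¹ := by
    rw [neg_div, Real.rpow_neg zero_le_two, rpow_one_third_pow zero_le_two]; norm_num
  have hcoeff : (s ^ 2)⁻¹ + s = 3 / 2 * s := by
    field_simp; linear_combination -hs3
  have hamgm := three_mul_mul_sq_le_cube_add_two_mul_cube (by positivity : 0 ≤ s * u * x)
    (by positivity : 0 ≤ v)
  have hrhs : a * x ^ 2 + l / x = (u ^ 3 * x ^ 3 + v ^ 3) / x := by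
    rw [← hu3, ← hv3]; field_simp
  rw [hs2, hcoeff, hv2, hrhs, le_div_iff₀ hx]
  linear_combination hamgm / 2 + u ^ 3 * x ^ 3 / 2 * hs3

theorem subproblem1_weak_duality_general (N : ℕ)
    (w1 w2 κ Rg Rl : ℝ)
    (hw1 : 0 < w1) (hκ : 0 < κ) (hRg : 0 < Rg) (hRl : 0 < Rl)
    (c D Tup : Fin N → ℝ)
    (hc : ∀ n, 0 < c n) (hD : ∀ n, 0 < D n)
    (lam : Fin N → ℝ) (hlam : ∀ n, 0 ≤ lam n) (hsum : ∑ n, lam n = w2 * Rg) :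
    ∀ (f : Fin N → ℝ) (T : ℝ), (∀ n, 0 < f n) →
      (∀ n, Rl * c n * D n / f n + Tup n ≤ T) →
      ∑ n, (((2 : ℝ) ^ (-(2 : ℝ) / 3) + (2 : ℝ) ^ ((1 : ℝ) / 3))
              * Rl * (w1 * κ * Rg) ^ ((1 : ℝ) / 3) * c n * D n * lam n ^ ((2 : ℝ) / 3)
            + Tup n * lam n)
        ≤ w1 * Rg * ∑ n, κ * Rl * c n * D n * f n ^ 2 + w2 * Rg * T := by
  intro f T hf hT
  set C := (2 : ℝ) ^ (-(2 : ℝ) / 3) + (2 : ℝ) ^ ((1 : ℝ) / 3)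
  set a := w1 * κ * Rg
  have ha : 0 ≤ a := by positivity
  have hdevice (n : Fin N) :
      C * Rl * a ^ ((1 : ℝ) / 3) * c n * D n * lam n ^ ((2 : ℝ) / 3) + Tup n * lam n
        ≤ w1 * Rg * (κ * Rl * c n * D n * f n ^ 2) + lam n * T := by
    have he : 0 ≤ Rl * c n * D n := (mul_pos (mul_pos hRl (hc n)) (hD n)).le
    calc C * Rl * a ^ ((1 : ℝ) / 3) * c n * D n * lam n ^ ((2 : ℝ) / 3) + Tup n * lam n
        = Rl * c n * D n * (C * a ^ ((1 : ℝ) / 3) * lam n ^ ((2 : ℝ) / 3)) + Tup n * lam n := by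
          ring
      _ ≤ Rl * c n * D n * (a * f n ^ 2 + lam n / f n) + Tup n * lam n := by
          gcongr; exact rpow_one_third_mul_rpow_two_thirds_le ha (hlam n) (hf n)
      _ = a * (Rl * c n * D n) * f n ^ 2 + lam n * (Rl * c n * D n / f n + Tup n) := by ring
      _ ≤ a * (Rl * c n * D n) * f n ^ 2 + lam n * T := by gcongr; exacts [hlam n, hT n]
      _ = w1 * Rg * (κ * Rl * c n * D n * f n ^ 2) + lam n * T := by ring
  calc _ ≤ ∑ n, (w1 * Rg * (κ * Rl * c n * D n * f n ^ 2) + lam n * T) :=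
        sum_le_sum fun n _ => hdevice n
    _ = w1 * Rg * ∑ n, κ * Rl * c n * D n * f n ^ 2 + w2 * Rg * T := by
        rw [sum_add_distrib, ← mul_sum, ← sum_mul, hsum]

/-- Weak duality for Subproblem 1: for any dual multipliers λ ≥ 0 with
Σₙ λₙ = w₂·R_g, and any primal-feasible CPU frequencies f > 0 and completion time 𝒯
(R_l·cₙ·Dₙ/fₙ + Tₙ^up ≤ 𝒯 for all n), the primal objective dominates the dual
objective. -/
theorem subproblem1_weak_duality (N : ℕ) (hN : 1 ≤ N)
    (w1 w2 κ Rg Rl : ℝ)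
    (hw1 : 0 < w1) (hw2 : 0 ≤ w2) (hκ : 0 < κ) (hRg : 0 < Rg) (hRl : 0 < Rl)
    (c D Tup : Fin N → ℝ)
    (hc : ∀ n, 0 < c n) (hD : ∀ n, 0 < D n) (hTup : ∀ n, 0 ≤ Tup n)
    (lam : Fin N → ℝ) (hlam : ∀ n, 0 ≤ lam n) (hsum : ∑ n, lam n = w2 * Rg) :
    ∀ (f : Fin N → ℝ) (T : ℝ), (∀ n, 0 < f n) →
      (∀ n, Rl * c n * D n / f n + Tup n ≤ T) →
      ∑ n, (((2 : ℝ) ^ (-(2 : ℝ) / 3) + (2 : ℝ) ^ ((1 : ℝ) / 3))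
              * Rl * (w1 * κ * Rg) ^ ((1 : ℝ) / 3) * c n * D n * lam n ^ ((2 : ℝ) / 3)
            + Tup n * lam n)
        ≤ w1 * Rg * ∑ n, κ * Rl * c n * D n * f n ^ 2 + w2 * Rg * T :=
  subproblem1_weak_duality_general N w1 w2 κ Rg Rl hw1 hκ hRg hRl c D Tup hc hD lam hlam hsum
end

section
/- Let B > 0, ν > 0, β ≥ 0, d > 0, g > 0, N₀ > 0, and 0 ≤ p^min ≤ p^max. Define φ(p) = ν·(p·d − β·B·log₂(1 + p·g/(N₀·B))) for p ≥ 0, and let p̂ = min(p^max, max((β·g/(N₀·d·ln 2) − 1)·N₀·B/g, p^min)). Then for every p with p^min ≤ p ≤ p^max, φ(p̂) ≤ φ(p). -/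
/-!
Writing `Γ` for the unclamped stationary point, the derivative of
`p ↦ p d - β B log₂ (1 + p g / (N₀ B))` simplifies to `d g (p - Γ) / (N₀ B + p g)`.
So on `p ≥ 0` the objective decreases up to `Γ` and increases after it, and any function
with this shape attains its minimum over `[a, b]` at the clamp `min b (max Γ a)`.
-/

open Set

section Clamp

variable {α γ : Type*} [LinearOrder α] [Preorder γ] {f : α → γ} {s : Set α} {a b c p : α}

theorem apply_min_max_le_of_antitoneOn_of_monotoneOn [s.OrdConnected]
    (h_anti : AntitoneOn f (s ∩ Iic c)) (h_mono : MonotoneOn f (s ∩ Ici c))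
    (ha : a ∈ s) (hb : b ∈ s) (hap : a ≤ p) (hpb : p ≤ b) :
    f (min b (max c a)) ≤ f p := by
  have hp : p ∈ s := Set.Icc_subset s ha hb ⟨hap, hpb⟩
  rcases le_total c a with hca | hac
  · rw [max_eq_right hca, min_eq_right (hap.trans hpb)]
    exact h_mono ⟨ha, hca⟩ ⟨hp, hca.trans hap⟩ hap
  rcases le_total b c with hbc | hcb
  · rw [min_eq_left (hbc.trans (le_max_left c a))]
    exact h_anti ⟨hp, hpb.trans hbc⟩ ⟨hb, hbc⟩ hpb
  rw [max_eq_left hac, min_eq_right hcb]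
  have hc : c ∈ s := Set.Icc_subset s ha hb ⟨hac, hcb⟩
  rcases le_total p c with hpc | hcp
  · exact h_anti ⟨hp, hpc⟩ ⟨hc, le_rfl⟩ hpc
  · exact h_mono ⟨hc, le_rfl⟩ ⟨hp, hcp⟩ hcp

end Clamp

section PowerObjective

noncomputable def powerObjective (B β d g N0 : ℝ) (p : ℝ) : ℝ :=
  p * d - β * (B * Real.logb 2 (1 + p * g / (N0 * B)))

noncomputable def stationaryPower (B β d g N0 : ℝ) : ℝ :=
  (β * g / (N0 * d * Real.log 2) - 1) * N0 * B / g

variable {B β d g N0 : ℝ}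

theorem hasDerivAt_powerObjective (hB : B ≠ 0) (hd : d ≠ 0) (hg : g ≠ 0) (hN0 : N0 ≠ 0)
    {x : ℝ} (hx : N0 * B + x * g ≠ 0) :
    HasDerivAt (powerObjective B β d g N0)
      (d * g * (x - stationaryPower B β d g N0) / (N0 * B + x * g)) x := by
  have hlog2 : Real.log 2 ≠ 0 := (Real.log_pos one_lt_two).ne'
  have hNB : N0 * B ≠ 0 := mul_ne_zero hN0 hB
  have harg : 1 + x * g / (N0 * B) ≠ 0 := by
    rw [one_add_div hNB]
    exact div_ne_zero hx hNB
  have hinner : HasDerivAt (fun p : ℝ => 1 + p * g / (N0 * B)) (g / (N0 * B)) x := by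
    simpa [mul_div_assoc] using ((hasDerivAt_id x).mul_const (g / (N0 * B))).const_add 1
  have h := ((hasDerivAt_id x).mul_const d).sub
    ((((hinner.log harg).div_const (Real.log 2)).const_mul B).const_mul β)
  refine h.congr_deriv ?_
  have hx' : B * N0 + g * x ≠ 0 := by rwa [mul_comm B, mul_comm g]
  rw [eq_div_iff hx, stationaryPower]
  field_simp
  ring

theorem hasDerivAt_powerObjective_of_nonneg (hB : 0 < B) (hd : 0 < d) (hg : 0 < g)
    (hN0 : 0 < N0) {x : ℝ} (hx : 0 ≤ x) :
    HasDerivAt (powerObjective B β d g N0)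
      (d * g * (x - stationaryPower B β d g N0) / (N0 * B + x * g)) x :=
  hasDerivAt_powerObjective hB.ne' hd.ne' hg.ne' hN0.ne' (by positivity)

theorem monotoneOn_powerObjective (hB : 0 < B) (hd : 0 < d) (hg : 0 < g) (hN0 : 0 < N0) :
    MonotoneOn (powerObjective B β d g N0) (Ici 0 ∩ Ici (stationaryPower B β d g N0)) := by
  have hderiv := fun x (hx : 0 ≤ x) => hasDerivAt_powerObjective_of_nonneg (β := β) hB hd hg hN0 hx
  refine monotoneOn_of_hasDerivWithinAt_nonneg ((convex_Ici 0).inter (convex_Ici _))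
    (fun x hx => (hderiv x hx.1).continuousAt.continuousWithinAt)
    (fun x hx => (hderiv x (interior_subset hx).1).hasDerivWithinAt) fun x hx => ?_
  obtain ⟨hx0, hΓx⟩ : 0 ≤ x ∧ stationaryPower B β d g N0 ≤ x :=
    interior_subset (s := Ici 0 ∩ Ici _) hx
  exact div_nonneg (mul_nonneg (by positivity) (sub_nonneg.2 hΓx)) (by positivity)

theorem antitoneOn_powerObjective (hB : 0 < B) (hd : 0 < d) (hg : 0 < g) (hN0 : 0 < N0) :
    AntitoneOn (powerObjective B β d g N0) (Ici 0 ∩ Iic (stationaryPower B β d g N0)) := by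
  have hderiv := fun x (hx : 0 ≤ x) => hasDerivAt_powerObjective_of_nonneg (β := β) hB hd hg hN0 hx
  refine antitoneOn_of_hasDerivWithinAt_nonpos ((convex_Ici 0).inter (convex_Iic _))
    (fun x hx => (hderiv x hx.1).continuousAt.continuousWithinAt)
    (fun x hx => (hderiv x (interior_subset hx).1).hasDerivWithinAt) fun x hx => ?_
  obtain ⟨hx0, hxΓ⟩ : 0 ≤ x ∧ x ≤ stationaryPower B β d g N0 :=
    interior_subset (s := Ici 0 ∩ Iic _) hx
  exact div_nonpos_of_nonpos_of_nonneg
    (mul_nonpos_of_nonneg_of_nonpos (by positivity) (sub_nonpos.2 hxΓ)) (by positivity)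

end PowerObjective

theorem clamped_power_minimizes_general (B ν β d g N0 pmin pmax : ℝ)
    (hB : 0 < B) (hν : 0 < ν) (hd : 0 < d) (hg : 0 < g) (hN0 : 0 < N0)
    (hpmin : 0 ≤ pmin) (hpm : pmin ≤ pmax)
    (phat : ℝ)
    (hphat : phat = min pmax (max ((β * g / (N0 * d * Real.log 2) - 1) * N0 * B / g) pmin)) :
    ∀ p : ℝ, pmin ≤ p → p ≤ pmax →
      ν * (phat * d - β * (B * Real.logb 2 (1 + phat * g / (N0 * B)))) ≤
        ν * (p * d - β * (B * Real.logb 2 (1 + p * g / (N0 * B)))) := by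
  intro p hpmin_p hp_pmax
  subst hphat
  refine mul_le_mul_of_nonneg_left ?_ hν.le
  exact apply_min_max_le_of_antitoneOn_of_monotoneOn (s := Ici 0)
    (antitoneOn_powerObjective hB hd hg hN0) (monotoneOn_powerObjective hB hd hg hN0)
    hpmin (hpmin.trans hpm) hpmin_p hp_pmax

/-- For fixed bandwidth B, the clamped stationary point
p̂ = min(p^max, max((β·g/(N₀·d·ln 2) − 1)·N₀·B/g, p^min)) minimizes
φ(p) = ν·(p·d − β·B·log₂(1 + p·g/(N₀·B))) over [p^min, p^max]. -/
theorem clamped_power_minimizes (B ν β d g N0 pmin pmax : ℝ)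
    (hB : 0 < B) (hν : 0 < ν) (hβ : 0 ≤ β) (hd : 0 < d) (hg : 0 < g) (hN0 : 0 < N0)
    (hpmin : 0 ≤ pmin) (hpm : pmin ≤ pmax)
    (phat : ℝ)
    (hphat : phat = min pmax (max ((β * g / (N0 * d * Real.log 2) - 1) * N0 * B / g) pmin)) :
    ∀ p : ℝ, pmin ≤ p → p ≤ pmax →
      ν * (phat * d - β * (B * Real.logb 2 (1 + phat * g / (N0 * B)))) ≤
        ν * (p * d - β * (B * Real.logb 2 (1 + p * g / (N0 * B)))) :=
  clamped_power_minimizes_general B ν β d g N0 pmin pmax hB hν hd hg hN0 hpmin hpm phat hphat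
end
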